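/- arXiv:2111.04299 — 3 statements merged into one kernel-verified Lean document; each statement's English description precedes it below -/
import Mathlib

section
/- For a hyperbolic triangle with sides of length a, b, c and angle γ opposite the side of length c, if γ ≥ γ₀ > 0 with γ₀ ≤ π/2, then c ≥ a + b + ln((1 - cos γ₀)/4). In particular there is a constant K = K(γ₀) = -ln((1-cos γ₀)/4) such that c ≥ a + b - K. -/
/-!
The law of cosines gives `cosh c = cosh a cosh b - sinh a sinh b cos γ`, and `cos γ ≤ cos γ₀ =: k`
with `0 ≤ k < 1`. Writing `cosh a cosh b - k sinh a sinh b = (1 - k) cosh a cosh b + k cosh (a - b)`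
and dropping the last term gives `cosh c ≥ (1 - k) cosh a cosh b ≥ (1 - k) e^(a+b) / 4`.
Since `cosh c ≤ e^c` for `c ≥ 0`, taking logarithms yields the bound.
-/

open Real

namespace Real

lemma exp_div_two_le_cosh (x : ℝ) : exp x / 2 ≤ cosh x := by
  rw [cosh_eq]
  linarith [exp_pos (-x)]

lemma cosh_le_exp_of_nonneg {x : ℝ} (hx : 0 ≤ x) : cosh x ≤ exp x := by
  rw [← cosh_add_sinh]
  linarith [sinh_nonneg_iff.2 hx]

lemma add_log_le_of_mul_exp_le_cosh {s m c : ℝ} (hc : 0 ≤ c) (hm : 0 < m)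
    (h : m * exp s ≤ cosh c) : s + log m ≤ c := by
  rw [← exp_le_exp, exp_add, exp_log hm, mul_comm]
  exact h.trans (cosh_le_exp_of_nonneg hc)

lemma one_sub_mul_exp_add_div_four_le_cosh_mul_cosh_sub {a b k t : ℝ} (ha : 0 ≤ a) (hb : 0 ≤ b)
    (hk₀ : 0 ≤ k) (hk₁ : k ≤ 1) (ht : t ≤ k) :
    (1 - k) / 4 * exp (a + b) ≤ cosh a * cosh b - sinh a * sinh b * t := by
  have hsinh : 0 ≤ sinh a * sinh b := mul_nonneg (sinh_nonneg_iff.2 ha) (sinh_nonneg_iff.2 hb)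
  calc (1 - k) / 4 * exp (a + b) = (1 - k) * (exp a / 2 * (exp b / 2)) := by
        rw [exp_add]; ring
    _ ≤ (1 - k) * (cosh a * cosh b) := by
        gcongr <;> exact exp_div_two_le_cosh _
    _ ≤ (1 - k) * (cosh a * cosh b) + k * cosh (a - b) :=
        le_add_of_nonneg_right (mul_nonneg hk₀ (cosh_pos _).le)
    _ = cosh a * cosh b - sinh a * sinh b * k := by rw [cosh_sub]; ring
    _ ≤ cosh a * cosh b - sinh a * sinh b * t :=
        sub_le_sub_left (mul_le_mul_of_nonneg_left ht hsinh) _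

end Real

/-- For a hyperbolic triangle with sides `a, b, c` and angle `γ` opposite `c`
(hyperbolic law of cosines given as hypothesis), if `γ ≥ γ₀ > 0` with `γ₀ ≤ π/2`,
then `c ≥ a + b + log ((1 - cos γ₀)/4)`, i.e. `c ≥ a + b - K` with
`K = - log ((1 - cos γ₀)/4)`. -/
theorem hyperbolic_triangle_side_lower_bound
    (a b c γ γ₀ : ℝ) (ha : 0 < a) (hb : 0 < b) (hc : 0 < c)
    (hγ : γ ∈ Set.Ioo 0 π) (hγ₀ : 0 < γ₀) (hγ₀' : γ₀ ≤ π / 2) (hγγ₀ : γ₀ ≤ γ)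
    (hlaw : Real.cosh c = Real.cosh a * Real.cosh b - Real.sinh a * Real.sinh b * Real.cos γ) :
    c ≥ a + b + Real.log ((1 - Real.cos γ₀) / 4) := by
  have hπ := pi_pos
  have hcos_nonneg : 0 ≤ cos γ₀ := cos_nonneg_of_mem_Icc ⟨by linarith, hγ₀'⟩
  have hcos_lt_one : cos γ₀ < 1 := by
    simpa using cos_lt_cos_of_nonneg_of_le_pi le_rfl (by linarith) hγ₀
  have hcos_le : cos γ ≤ cos γ₀ := cos_le_cos_of_nonneg_of_le_pi hγ₀.le hγ.2.le hγγ₀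
  have hcosh_c := one_sub_mul_exp_add_div_four_le_cosh_mul_cosh_sub ha.le hb.le hcos_nonneg
    hcos_lt_one.le hcos_le
  rw [← hlaw] at hcosh_c
  exact add_log_le_of_mul_exp_le_cosh hc.le (by linarith) hcosh_c
end

section
/- Let C be a Euclidean circle of radius r that intersects the unit circle at right angles and intersects the x-axis at an angle θ > 0 at a point u inside the unit disk lying on the x-axis. Then r = (1 − ‖u‖²)/(2‖u‖ sin θ). -/
open Real EuclideanGeometry

theorem EuclideanGeometry.dist_sq_eq_add_of_angle_eq_pi_div_two_add {V P : Type*}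
    [NormedAddCommGroup V] [InnerProductSpace ℝ V] [MetricSpace P] [NormedAddTorsor V P]
    {a b c : P} {θ : ℝ} (h : ∠ a b c = π / 2 + θ) :
    dist a c ^ 2 = dist a b ^ 2 + dist b c ^ 2 + 2 * dist a b * dist b c * sin θ := by
  have hcos := law_cos a b c
  rw [h, add_comm (π / 2), cos_add_pi_div_two, dist_comm c b] at hcos
  linarith

theorem radius_of_orthogonal_circle_general
    (c u : EuclideanSpace ℝ (Fin 2)) (r θ : ℝ)
    (horth : ‖c‖ ^ 2 = 1 + r ^ 2)
    (huC : dist u c = r) (hu1 : ‖u‖ < 1)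
    (hangle : EuclideanGeometry.angle (0 : EuclideanSpace ℝ (Fin 2)) u c = π / 2 + θ) :
    r = (1 - ‖u‖ ^ 2) / (2 * ‖u‖ * Real.sin θ) := by
  have hcos := dist_sq_eq_add_of_angle_eq_pi_div_two_add hangle
  rw [dist_zero_left, dist_zero_left, huC, horth] at hcos
  have hprod : r * (2 * ‖u‖ * sin θ) = 1 - ‖u‖ ^ 2 := by linarith
  have hpos : 0 < 1 - ‖u‖ ^ 2 := by nlinarith [norm_nonneg u]
  exact eq_div_of_mul_eq (right_ne_zero_of_mul (hprod ▸ hpos.ne')) hprod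

/-- Let `C` be a Euclidean circle with center `c` and radius `r` that intersects
the unit circle at right angles (`‖c‖² = 1 + r²`) and meets the x-axis at a point
`u ≠ 0` inside the unit disk at an angle `θ ∈ (0, π/2]` (meaning the angle at `u`
in the Euclidean triangle `o, u, c` equals `π/2 + θ`). Then
`r = (1 − ‖u‖²)/(2‖u‖ sin θ)`. -/
theorem radius_of_orthogonal_circle
    (c u : EuclideanSpace ℝ (Fin 2)) (r θ : ℝ) (hr : 0 < r)
    (horth : ‖c‖ ^ 2 = 1 + r ^ 2)
    (huC : dist u c = r) (hu0 : u ≠ 0) (hu1 : ‖u‖ < 1) (hux : u 1 = 0)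
    (hθ : θ ∈ Set.Ioc 0 (π / 2))
    (hangle : EuclideanGeometry.angle (0 : EuclideanSpace ℝ (Fin 2)) u c = π / 2 + θ) :
    r = (1 - ‖u‖ ^ 2) / (2 * ‖u‖ * Real.sin θ) :=
  radius_of_orthogonal_circle_general c u r θ horth huC hu1 hangle
end

section
/- Let B₁ = B(c₁,r₁) be a hyperbolic disk and C = ∂B(c₂,r₂) a hyperbolic circle, with d = dist(c₁,c₂). If x lies on C and inside B₁ (i.e. dist(c₁,x) ≤ r₁), then the angle α = ∠c₁c₂x satisfies cos α ≥ 1 − 4·e^{r₁ − r₂ − d}. -/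
/-!
Since `cosh r₂ cosh d - sinh r₂ sinh d = cosh (r₂ - d)` and
`e^{r₂ + d} - 4 sinh r₂ sinh d = 2 cosh (r₂ - d) - e^{-(r₂ + d)}`, writing `t = e^{r₁ - r₂ - d}` gives
`cosh r₂ cosh d - e^{r₁} - (1 - 4t) sinh r₂ sinh d = (1 - 2t) cosh (r₂ - d) + t e^{-(r₂ + d)}`,
which is nonnegative when `2t ≤ 1`. Together with `cosh dx ≤ cosh r₁ ≤ e^{r₁}` and the law of cosines
this is the bound; when `2t > 1` the bound is below `-1` and there is nothing to prove.
-/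

open Real

lemma Real.cosh_le_exp {x : ℝ} (hx : 0 ≤ x) : cosh x ≤ exp x := by
  rw [← cosh_add_sinh]
  linarith [sinh_nonneg_iff.2 hx]

lemma Real.exp_add_sub_four_mul_sinh_mul_sinh (x y : ℝ) :
    exp (x + y) - 4 * (sinh x * sinh y) = 2 * cosh (x - y) - exp (-(x + y)) := by
  simp only [sinh_eq, cosh_eq, exp_sub, exp_add, exp_neg]
  field_simp
  ring

lemma Real.mul_sinh_mul_sinh_le_cosh_mul_cosh_sub_exp {x y R : ℝ}
    (hR : 4 * exp (R - x - y) ≤ 2) :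
    (1 - 4 * exp (R - x - y)) * (sinh x * sinh y) ≤ cosh x * cosh y - exp R := by
  set t := exp (R - x - y)
  have hexpR : exp R = t * exp (x + y) := by
    rw [← exp_add]; congr 1; ring
  have hdiff : cosh x * cosh y - exp R - (1 - 4 * t) * (sinh x * sinh y) =
      (1 - 2 * t) * cosh (x - y) + t * exp (-(x + y)) := by
    rw [hexpR, cosh_sub]
    linear_combination (-t) * exp_add_sub_four_mul_sinh_mul_sinh x y - 2 * t * cosh_sub x y
  have hpos : 0 ≤ (1 - 2 * t) * cosh (x - y) + t * exp (-(x + y)) := by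
    have : 0 ≤ 1 - 2 * t := by linarith
    positivity
  linarith

theorem cos_angle_ge_of_on_circle_inside_disk_general
    (r₁ r₂ d dx α : ℝ) (hr₂ : 0 < r₂) (hd : 0 < d) (hdx : 0 ≤ dx)
    (hlaw : Real.cosh dx =
      Real.cosh r₂ * Real.cosh d - Real.sinh r₂ * Real.sinh d * Real.cos α)
    (hin : dx ≤ r₁) :
    Real.cos α ≥ 1 - 4 * Real.exp (r₁ - r₂ - d) := by
  rcases le_or_gt 2 (4 * exp (r₁ - r₂ - d)) with hbig | hsmall
  · linarith [neg_one_le_cos α]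
  have hsinh : 0 < sinh r₂ * sinh d := mul_pos (sinh_pos_iff.2 hr₂) (sinh_pos_iff.2 hd)
  have hcosh : cosh dx ≤ exp r₁ :=
    (cosh_le_cosh.2 (by rwa [abs_of_nonneg hdx, abs_of_nonneg (hdx.trans hin)])).trans
      (cosh_le_exp (hdx.trans hin))
  have hbound := mul_sinh_mul_sinh_le_cosh_mul_cosh_sub_exp hsmall.le
  rw [ge_iff_le, ← mul_le_mul_iff_left₀ hsinh]
  linarith

/-- Let `B₁ = B(c₁,r₁)` be a hyperbolic disk and `C = ∂B(c₂,r₂)` a hyperbolic circle,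
with `d = dist(c₁,c₂)`. If `x` lies on `C` and inside `B₁`, i.e. `dist(c₁,x) ≤ r₁`,
where `dist(c₁,x)` is given by the hyperbolic law of cosines in the triangle `c₁ c₂ x`
with angle `α` at `c₂`, then `cos α ≥ 1 − 4 e^{r₁ − r₂ − d}`. -/
theorem cos_angle_ge_of_on_circle_inside_disk
    (r₁ r₂ d dx α : ℝ) (hr₂ : 0 < r₂) (hd : 0 < d) (hdx : 0 ≤ dx)
    (hα : α ∈ Set.Icc 0 π)
    (hlaw : Real.cosh dx =
      Real.cosh r₂ * Real.cosh d - Real.sinh r₂ * Real.sinh d * Real.cos α)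
    (hin : dx ≤ r₁) :
    Real.cos α ≥ 1 - 4 * Real.exp (r₁ - r₂ - d) :=
  cos_angle_ge_of_on_circle_inside_disk_general r₁ r₂ d dx α hr₂ hd hdx hlaw hin
end
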